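/- For every n ≥ 2 the following operator identity on X holds: Σ_{S sparse ⊆ {1,…,n−1}} W^n_S = â ∘ (Σ_{S sparse ⊆ {1,…,n−2}} W^{n−1}_S) + b̂ ∘ (Σ_{S sparse ⊆ {1,…,n−3}} W^{n−2}_S), where for n = 2 the last sum consists of the single term W^0_∅ = id. -/

import Mathlib

/-- The collection of sparse subsets of `{1, …, n-1}`: subsets `S ⊆ {1, …, n-1}` such that
`i ∈ S` implies `i + 1 ∉ S`. -/
def sparseSets (n : ℕ) : Finset (Finset ℕ) :=
  (Finset.Icc 1 (n - 1)).powerset.filter fun S => ∀ i ∈ S, i + 1 ∉ S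

/-- The operator `W^n_S`: the composition of the factors associated to the positions
`n, n-1, …, 1` taken in decreasing order, in which for each `i ∈ S` the pair of consecutive
positions `i+1` and `i` together contributes a single factor `B`, while every position `j`
with `j ∉ S` and `j - 1 ∉ S` contributes a factor `A`; by convention `W^0_∅` is the
identity. -/
def Wop {K X : Type*} [Field K] [AddCommGroup X] [Module K X]
    (A B : Module.End K X) : ℕ → Finset ℕ → Module.End K X
  | 0, _ => 1
  | 1, _ => A
  | n + 2, S => if n + 1 ∈ S then B * Wop A B n S else A * Wop A B (n + 1) S

/-!
Split the sparse subsets of `{1, …, n-1}` according to whether they contain `n - 1`. Those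
that do not are exactly the sparse subsets of `{1, …, n-2}`, and their first factor is `A`.
Those that do cannot contain `n - 2`, so removing `n - 1` is a bijection onto the sparse subsets
of `{1, …, n-3}`, and their first factor is `B`.
-/

open Finset

theorem mem_sparseSets {n : ℕ} {S : Finset ℕ} :
    S ∈ sparseSets n ↔ (∀ i ∈ S, 1 ≤ i ∧ i < n) ∧ ∀ i ∈ S, i + 1 ∉ S := by
  simp only [sparseSets, mem_filter, mem_powerset, subset_iff, mem_Icc]
  refine and_congr_left fun _ => forall₂_congr fun i _ => ?_
  omega

theorem notMem_of_mem_sparseSets {n k : ℕ} {S : Finset ℕ} (hS : S ∈ sparseSets n) (hk : n ≤ k) :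
    k ∉ S :=
  fun hkS => by have := (mem_sparseSets.1 hS).1 k hkS; omega

theorem sparseSets_filter_notMem (m : ℕ) :
    (sparseSets (m + 2)).filter (m + 1 ∉ ·) = sparseSets (m + 1) := by
  ext S
  rw [mem_filter]
  constructor
  · rintro ⟨hS, hm⟩
    rw [mem_sparseSets] at hS ⊢
    refine ⟨fun i hi => ?_, hS.2⟩
    have := hS.1 i hi
    have : i ≠ m + 1 := by rintro rfl; exact hm hi
    omega
  · intro hS
    refine ⟨?_, notMem_of_mem_sparseSets hS le_rfl⟩
    rw [mem_sparseSets] at hS ⊢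
    exact ⟨fun i hi => by have := hS.1 i hi; omega, hS.2⟩

theorem erase_mem_sparseSets {m : ℕ} {S : Finset ℕ} (hS : S ∈ sparseSets (m + 2))
    (hm : m + 1 ∈ S) : S.erase (m + 1) ∈ sparseSets m := by
  rw [mem_sparseSets] at hS ⊢
  obtain ⟨hbound, hsparse⟩ := hS
  refine ⟨fun i hi => ?_, fun i hi hi' => hsparse i (mem_of_mem_erase hi) (mem_of_mem_erase hi')⟩
  have := hbound i (mem_of_mem_erase hi)
  have : i ≠ m + 1 := ne_of_mem_erase hi
  have : i ≠ m := fun him => hsparse i (mem_of_mem_erase hi) (him ▸ hm)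
  omega

theorem insert_mem_sparseSets {m : ℕ} {T : Finset ℕ} (hT : T ∈ sparseSets m) :
    insert (m + 1) T ∈ sparseSets (m + 2) := by
  rw [mem_sparseSets] at hT ⊢
  obtain ⟨hbound, hsparse⟩ := hT
  refine ⟨fun i hi => ?_, fun i hi hi' => ?_⟩
  · rcases mem_insert.1 hi with rfl | hi
    · omega
    · have := hbound i hi; omega
  · rcases mem_insert.1 hi with rfl | hi <;> rcases mem_insert.1 hi' with hi' | hi'
    · omega
    · have := hbound _ hi'; omega
    · have := hbound i hi; omega
    · exact hsparse i hi hi'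

section Wop

variable {K X : Type*} [Field K] [AddCommGroup X] [Module K X] (A B : Module.End K X)

theorem Wop_congr : ∀ (n : ℕ) {S T : Finset ℕ}, (∀ i < n, i ∈ S ↔ i ∈ T) →
    Wop A B n S = Wop A B n T
  | 0, _, _, _ => rfl
  | 1, _, _, _ => rfl
  | n + 2, S, T, h => by
    have hS : ∀ i < n + 1, i ∈ S ↔ i ∈ T := fun i hi => h i (by omega)
    simp only [Wop, h (n + 1) (by omega), Wop_congr n fun i hi => hS i (by omega),
      Wop_congr (n + 1) hS]

theorem Wop_erase_of_le {n k : ℕ} (S : Finset ℕ) (hk : n ≤ k) :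
    Wop A B n (S.erase k) = Wop A B n S :=
  Wop_congr A B n fun i hi => by rw [mem_erase]; exact and_iff_right (by omega)

theorem Wop_add_two_of_mem {m : ℕ} {S : Finset ℕ} (hm : m + 1 ∈ S) :
    Wop A B (m + 2) S = B * Wop A B m (S.erase (m + 1)) := by
  rw [Wop, if_pos hm, Wop_erase_of_le A B S (by omega)]

theorem Wop_add_two_of_notMem {m : ℕ} {S : Finset ℕ} (hm : m + 1 ∉ S) :
    Wop A B (m + 2) S = A * Wop A B (m + 1) S := by
  rw [Wop, if_neg hm]

end Wop

/-- For every `n ≥ 2` the operator identity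
`∑_{S sparse ⊆ {1,…,n-1}} W^n_S
  = A ∘ (∑_{S sparse ⊆ {1,…,n-2}} W^{n-1}_S) + B ∘ (∑_{S sparse ⊆ {1,…,n-3}} W^{n-2}_S)`
holds; for `n = 2` the last sum consists of the single term `W^0_∅ = id`. -/
theorem sparse_sum_recurrence {K X : Type*} [Field K] [AddCommGroup X] [Module K X]
    (A B : Module.End K X) (n : ℕ) (hn : 2 ≤ n) :
    ∑ S ∈ sparseSets n, Wop A B n S =
      A * (∑ S ∈ sparseSets (n - 1), Wop A B (n - 1) S) +
        B * (∑ S ∈ sparseSets (n - 2), Wop A B (n - 2) S) := by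
  obtain ⟨m, rfl⟩ : ∃ m, n = m + 2 := ⟨n - 2, by omega⟩
  have h_notMem : ∑ S ∈ (sparseSets (m + 2)).filter (m + 1 ∉ ·), Wop A B (m + 2) S =
      A * ∑ S ∈ sparseSets (m + 1), Wop A B (m + 1) S := by
    rw [sparseSets_filter_notMem, mul_sum]
    exact sum_congr rfl fun S hS => Wop_add_two_of_notMem A B (notMem_of_mem_sparseSets hS le_rfl)
  have h_mem : ∑ S ∈ (sparseSets (m + 2)).filter (m + 1 ∈ ·), Wop A B (m + 2) S =
      B * ∑ S ∈ sparseSets m, Wop A B m S := by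
    rw [mul_sum]
    refine sum_nbij' (·.erase (m + 1)) (insert (m + 1)) (fun S hS => ?_)
      (fun T hT => ?_) (fun S hS => ?_) (fun T hT => ?_) (fun S hS => ?_)
    · exact erase_mem_sparseSets (mem_filter.1 hS).1 (mem_filter.1 hS).2
    · exact mem_filter.2 ⟨insert_mem_sparseSets hT, mem_insert_self _ _⟩
    · exact insert_erase (mem_filter.1 hS).2
    · exact erase_insert (notMem_of_mem_sparseSets hT (by omega))
    · exact Wop_add_two_of_mem A B (mem_filter.1 hS).2
  rw [← sum_filter_add_sum_filter_not _ (m + 1 ∈ ·), h_mem, h_notMem, add_comm]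
  rfl
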